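/- arXiv:2603.18754 — 6 statements merged into one kernel-verified Lean document; each statement's English description precedes it below -/
import Mathlib

section
/- Let P ⊆ ℝⁿ be a polytope all of whose vertices have 0/1 coordinates. If P has dimension 2, then P has at most 4 vertices; moreover, if P has exactly 4 vertices then they can be labeled x¹, x², x³, x⁴ so that x¹ + x³ = x² + x⁴ (i.e., P is a parallelogram). -/
set_option synthInstance.maxHeartbeats 800000
set_option maxHeartbeats 1600000

lemma key (n : ℕ) (D : Submodule ℝ (Fin n → ℝ)) (hD : Module.finrank ℝ D = 2) :
    ∃ i j : Fin n, ∀ v ∈ D, v i = 0 → v j = 0 → v = 0 := by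
  have hpos : 0 < Module.finrank ℝ D := by omega
  have : Nontrivial D := Module.nontrivial_of_finrank_pos hpos
  obtain ⟨u, hu⟩ := exists_ne (0 : D)
  have hu' : (u : Fin n → ℝ) ≠ 0 := fun h => hu (Subtype.ext h)
  obtain ⟨i, hi⟩ := Function.ne_iff.mp hu'
  set g : D →ₗ[ℝ] ℝ := (LinearMap.proj i).comp D.subtype with hg
  have hrange : LinearMap.range g = ⊤ := by
    rcases Ideal.eq_bot_or_top (LinearMap.range g) with h | h
    · exfalso
      have : g u = 0 := by
        have := h ▸ (LinearMap.mem_range_self g u)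
        simpa [Submodule.mem_bot] using this
      exact hi this
    · exact h
  have hkerg : Module.finrank ℝ (LinearMap.ker g) = 1 := by
    have h1 := LinearMap.finrank_range_add_finrank_ker g
    rw [hD, hrange] at h1
    have : Module.finrank ℝ (⊤ : Submodule ℝ ℝ) = 1 := by simp [finrank_top]
    omega
  set K : Submodule ℝ (Fin n → ℝ) := Submodule.map D.subtype (LinearMap.ker g) with hK
  have hfinK : Module.finrank ℝ K = 1 := by
    rw [← hkerg]
    exact (Submodule.equivMapOfInjective D.subtype D.injective_subtype
      (LinearMap.ker g)).finrank_eq.symm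
  have : Nontrivial K := Module.nontrivial_of_finrank_pos (by omega : 0 < Module.finrank ℝ K)
  obtain ⟨w, hw⟩ := exists_ne (0 : K)
  have hw' : (w : Fin n → ℝ) ≠ 0 := fun h => hw (Subtype.ext h)
  obtain ⟨j, hj⟩ := Function.ne_iff.mp hw'
  refine ⟨i, j, fun v hv hvi hvj => ?_⟩
  have hvK : v ∈ K := by
    refine ⟨⟨v, hv⟩, ?_, rfl⟩
    simp [hg, LinearMap.mem_ker, hvi]
  have hspan : Submodule.span ℝ {w} = ⊤ :=
    (finrank_eq_one_iff_of_nonzero w hw).mp hfinK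
  have hmem : (⟨v, hvK⟩ : K) ∈ Submodule.span ℝ {w} := hspan ▸ Submodule.mem_top
  obtain ⟨c, hc⟩ := Submodule.mem_span_singleton.mp hmem
  have hcj : c * (w : Fin n → ℝ) j = v j := by
    have := congrArg (fun x : K => (x : Fin n → ℝ) j) hc
    simpa using this
  have hc0 : c = 0 := by
    rw [hvj] at hcj
    exact (mul_eq_zero.mp hcj).resolve_right hj
  have hvz : (⟨v, hvK⟩ : K) = 0 := by rw [← hc, hc0, zero_smul]
  have := congrArg (fun x : K => (x : Fin n → ℝ)) hvz
  simpa using this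

theorem stmt0 (n : ℕ) (S : Finset (Fin n → ℝ)) (P : Set (Fin n → ℝ))
    (hP : P = convexHull ℝ (S : Set (Fin n → ℝ)))
    (h01 : ∀ x ∈ Set.extremePoints ℝ P, ∀ i, x i = 0 ∨ x i = 1)
    (hdim : Module.finrank ℝ (affineSpan ℝ P).direction = 2) :
    ∃ V : Finset (Fin n → ℝ), (↑V = Set.extremePoints ℝ P) ∧ V.card ≤ 4 ∧
      (V.card = 4 → ∃ x1 x2 x3 x4 : Fin n → ℝ,
        V = {x1, x2, x3, x4} ∧
        x1 ≠ x2 ∧ x1 ≠ x3 ∧ x1 ≠ x4 ∧ x2 ≠ x3 ∧ x2 ≠ x4 ∧ x3 ≠ x4 ∧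
        x1 + x3 = x2 + x4) := by
  classical
  set E := Set.extremePoints ℝ P with hE
  have hES : E ⊆ ↑S := by
    rw [hE, hP]; exact extremePoints_convexHull_subset
  set V : Finset (Fin n → ℝ) := S.filter (fun x => x ∈ E) with hV
  have hVE : (↑V : Set (Fin n → ℝ)) = E := by
    ext x
    simp only [hV, Finset.coe_filter, Set.mem_setOf_eq, Finset.mem_coe]
    exact ⟨fun h => h.2, fun h => ⟨hES h, h⟩⟩
  obtain ⟨i, j, hd⟩ := key n (affineSpan ℝ P).direction hdim
  -- differences of points of E lie in the direction
  have hdiff : ∀ x ∈ E, ∀ y ∈ E, x - y ∈ (affineSpan ℝ P).direction := by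
    intro x hx y hy
    have hx' : x ∈ affineSpan ℝ P := subset_affineSpan ℝ P (extremePoints_subset hx)
    have hy' : y ∈ affineSpan ℝ P := subset_affineSpan ℝ P (extremePoints_subset hy)
    exact AffineSubspace.vsub_mem_direction hx' hy'
  have hinj : ∀ x ∈ E, ∀ y ∈ E, x i = y i → x j = y j → x = y := by
    intro x hx y hy hij hjj
    have h0 : x - y = 0 := hd _ (hdiff x hx y hy) (by simp [hij]) (by simp [hjj])
    exact sub_eq_zero.mp h0
  set f : (Fin n → ℝ) → ℝ × ℝ := fun x => (x i, x j) with hf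
  set Q : Finset (ℝ × ℝ) := {(0,0),(1,0),(1,1),(0,1)} with hQ
  have hQcard : Q.card = 4 := by
    rw [hQ]
    rw [Finset.card_insert_of_notMem (by norm_num [Prod.ext_iff]),
        Finset.card_insert_of_notMem (by norm_num [Prod.ext_iff]),
        Finset.card_insert_of_notMem (by norm_num [Prod.ext_iff]),
        Finset.card_singleton]
  have hmaps : ∀ x ∈ V, f x ∈ Q := by
    intro x hx
    have hxE : x ∈ E := (Finset.mem_filter.mp hx).2
    rcases h01 x hxE i with h1 | h1 <;> rcases h01 x hxE j with h2 | h2 <;>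
      simp [hf, hQ, h1, h2]
  have hinjV : Set.InjOn f ↑V := by
    intro x hx y hy hxy
    rw [hVE] at hx hy
    rw [hf] at hxy
    simp only [Prod.mk.injEq] at hxy
    exact hinj x hx y hy hxy.1 hxy.2
  have hcard : V.card ≤ 4 := by
    have := Finset.card_le_card_of_injOn f hmaps hinjV
    omega
  refine ⟨V, hVE, hcard, ?_⟩
  intro h4
  have himcard : (V.image f).card = 4 := by
    rw [Finset.card_image_of_injOn hinjV, h4]
  have himsub : V.image f ⊆ Q := by
    intro p hp
    obtain ⟨x, hx, rfl⟩ := Finset.mem_image.mp hp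
    exact hmaps x hx
  have himeq : V.image f = Q :=
    Finset.eq_of_subset_of_card_le himsub (by omega)
  have hget : ∀ p ∈ Q, ∃ x ∈ V, f x = p := by
    intro p hp
    rw [← himeq] at hp
    exact Finset.mem_image.mp hp
  obtain ⟨x1, hx1V, hfx1⟩ := hget (0,0) (by simp [hQ])
  obtain ⟨x2, hx2V, hfx2⟩ := hget (1,0) (by simp [hQ])
  obtain ⟨x3, hx3V, hfx3⟩ := hget (1,1) (by simp [hQ])
  obtain ⟨x4, hx4V, hfx4⟩ := hget (0,1) (by simp [hQ])
  simp only [hf, Prod.mk.injEq] at hfx1 hfx2 hfx3 hfx4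
  have h12 : x1 ≠ x2 := fun h => by rw [h, hfx2.1] at hfx1; norm_num at hfx1
  have h13 : x1 ≠ x3 := fun h => by rw [h, hfx3.1] at hfx1; norm_num at hfx1
  have h14 : x1 ≠ x4 := fun h => by rw [h, hfx4.2] at hfx1; norm_num at hfx1
  have h23 : x2 ≠ x3 := fun h => by rw [h, hfx3.2] at hfx2; norm_num at hfx2
  have h24 : x2 ≠ x4 := fun h => by rw [h, hfx4.1] at hfx2; norm_num at hfx2
  have h34 : x3 ≠ x4 := fun h => by rw [h, hfx4.1] at hfx3; norm_num at hfx3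
  have hx1E : x1 ∈ E := (Finset.mem_filter.mp hx1V).2
  have hx2E : x2 ∈ E := (Finset.mem_filter.mp hx2V).2
  have hx3E : x3 ∈ E := (Finset.mem_filter.mp hx3V).2
  have hx4E : x4 ∈ E := (Finset.mem_filter.mp hx4V).2
  have hsum : x1 + x3 = x2 + x4 := by
    have hmem : x1 + x3 - (x2 + x4) ∈ (affineSpan ℝ P).direction := by
      have h1 := hdiff x1 hx1E x2 hx2E
      have h2 := hdiff x3 hx3E x4 hx4E
      have : x1 + x3 - (x2 + x4) = (x1 - x2) + (x3 - x4) := by ring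
      rw [this]
      exact Submodule.add_mem _ h1 h2
    have hzi : (x1 + x3 - (x2 + x4)) i = 0 := by
      simp [Pi.add_apply, Pi.sub_apply, hfx1.1, hfx2.1, hfx3.1, hfx4.1]
    have hzj : (x1 + x3 - (x2 + x4)) j = 0 := by
      simp [Pi.add_apply, Pi.sub_apply, hfx1.2, hfx2.2, hfx3.2, hfx4.2]
    have := hd _ hmem hzi hzj
    exact sub_eq_zero.mp this
  have hVeq : V = {x1, x2, x3, x4} := by
    have hsub : ({x1, x2, x3, x4} : Finset (Fin n → ℝ)) ⊆ V := by
      intro x hx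
      simp only [Finset.mem_insert, Finset.mem_singleton] at hx
      rcases hx with rfl | rfl | rfl | rfl <;> assumption
    have hc4 : ({x1, x2, x3, x4} : Finset (Fin n → ℝ)).card = 4 := by
      rw [Finset.card_insert_of_notMem (by simp [h12, h13, h14]),
          Finset.card_insert_of_notMem (by simp [h23, h24]),
          Finset.card_insert_of_notMem (by simp [h34]),
          Finset.card_singleton]
    exact (Finset.eq_of_subset_of_card_le hsub (by omega)).symm
  exact ⟨x1, x2, x3, x4, hVeq, h12, h13, h14, h23, h24, h34, hsum⟩
end

section
/- Let x, y, z be pairwise distinct points in {0,1}ⁿ such that z lies in the plane spanned by x and y (that is, z = λx + μy for some real λ, μ), z ≠ 0, and the four points 0, x, y, z are affinely spanning a 2-dimensional set. Then either z = x + y, or y = x + z, or x = y + z. -/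
theorem stmt1 (n : ℕ) (x y z : Fin n → ℝ)
    (hx : ∀ i, x i = 0 ∨ x i = 1) (hy : ∀ i, y i = 0 ∨ y i = 1)
    (hz : ∀ i, z i = 0 ∨ z i = 1)
    (hxy : x ≠ y) (hxz : x ≠ z) (hyz : y ≠ z) (hz0 : z ≠ 0)
    (hspan : ∃ l m : ℝ, z = l • x + m • y)
    (hdim : Module.finrank ℝ
      (affineSpan ℝ ({0, x, y, z} : Set (Fin n → ℝ))).direction = 2) :
    z = x + y ∨ y = x + z ∨ x = y + z := by
  obtain ⟨l, m, hlm⟩ := hspan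
  have hzc : ∀ i, z i = l * x i + m * y i := by
    intro i; rw [hlm]; simp
  by_cases h10 : ∃ i, x i = 1 ∧ y i = 0
  · obtain ⟨i, hxi, hyi⟩ := h10
    have hl : z i = l := by rw [hzc i, hxi, hyi]; ring
    by_cases h01 : ∃ j, x j = 0 ∧ y j = 1
    · -- Case A: both (1,0) and (0,1) coordinates exist
      obtain ⟨j, hxj, hyj⟩ := h01
      have hm : z j = m := by rw [hzc j, hxj, hyj]; ring
      rcases hz i with h1 | h1 <;> rcases hz j with h2 | h2
      · exact absurd (funext fun k => by
          rw [hzc k, ← hl, ← hm, h1, h2]; show _ = (0:ℝ); ring) hz0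
      · exact absurd (funext fun k => by
          rw [hzc k, ← hl, ← hm, h1, h2]; ring : y = z) hyz
      · exact absurd (funext fun k => by
          rw [hzc k, ← hl, ← hm, h1, h2]; ring : x = z) hxz
      · left
        funext k
        rw [hzc k, ← hl, ← hm, h1, h2]
        show _ = x k + y k; ring
    · -- Case B: (1,0) exists, no (0,1)
      push_neg at h01
      by_cases hy1 : ∃ j, y j = 1
      · obtain ⟨j, hyj⟩ := hy1
        have hxj : x j = 1 := (hx j).resolve_left fun h => h01 j h hyj
        have hlmj : z j = l + m := by rw [hzc j, hxj, hyj]; ring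
        rcases hz i with h1 | h1 <;> rcases hz j with h2 | h2
        · exact absurd (funext fun k => by
            have hm0 : m = 0 := by rw [h1] at hl; rw [h2] at hlmj; linarith
            rw [hzc k, ← hl, h1, hm0]; show _ = (0:ℝ); ring) hz0
        · exact absurd (funext fun k => by
            have hm1 : m = 1 := by rw [h1] at hl; rw [h2] at hlmj; linarith
            rw [hzc k, ← hl, h1, hm1]; ring : y = z) hyz
        · right; right
          funext k
          have hmn : m = -1 := by rw [h1] at hl; rw [h2] at hlmj; linarith
          have := hzc k
          rw [← hl, h1, hmn] at this
          show x k = y k + z k; rw [this]; ring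
        · exact absurd (funext fun k => by
            have hm0 : m = 0 := by rw [h1] at hl; rw [h2] at hlmj; linarith
            rw [hzc k, ← hl, h1, hm0]; ring : x = z) hxz
      · -- y = 0 on all coordinates
        push_neg at hy1
        have hy0 : ∀ k, y k = 0 := fun k => (hy k).resolve_right (hy1 k)
        rcases hz i with h1 | h1
        · exact absurd (funext fun k => by
            rw [h1] at hl
            rw [hzc k, ← hl, hy0 k]; show _ = (0:ℝ); ring) hz0
        · exact absurd (funext fun k => by
            rw [h1] at hl
            rw [hzc k, ← hl, hy0 k]; ring : x = z) hxz
  · push_neg at h10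
    by_cases h01 : ∃ j, x j = 0 ∧ y j = 1
    · -- Case C: (0,1) exists, no (1,0)
      obtain ⟨j, hxj, hyj⟩ := h01
      have hm : z j = m := by rw [hzc j, hxj, hyj]; ring
      by_cases hx1 : ∃ i, x i = 1
      · obtain ⟨i, hxi⟩ := hx1
        have hyi : y i = 1 := (hy i).resolve_left fun h => (h10 i hxi) h
        have hlmi : z i = l + m := by rw [hzc i, hxi, hyi]; ring
        rcases hz j with h1 | h1 <;> rcases hz i with h2 | h2
        · exact absurd (funext fun k => by
            have hl0 : l = 0 := by rw [h1] at hm; rw [h2] at hlmi; linarith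
            rw [hzc k, ← hm, h1, hl0]; show _ = (0:ℝ); ring) hz0
        · exact absurd (funext fun k => by
            have hl1 : l = 1 := by rw [h1] at hm; rw [h2] at hlmi; linarith
            rw [hzc k, ← hm, h1, hl1]; ring : x = z) hxz
        · right; left
          funext k
          have hln : l = -1 := by rw [h1] at hm; rw [h2] at hlmi; linarith
          have := hzc k
          rw [← hm, h1, hln] at this
          show y k = x k + z k; rw [this]; ring
        · exact absurd (funext fun k => by
            have hl0 : l = 0 := by rw [h1] at hm; rw [h2] at hlmi; linarith
            rw [hzc k, ← hm, h1, hl0]; ring : y = z) hyz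
      · push_neg at hx1
        have hx0 : ∀ k, x k = 0 := fun k => (hx k).resolve_right (hx1 k)
        rcases hz j with h1 | h1
        · exact absurd (funext fun k => by
            rw [h1] at hm
            rw [hzc k, ← hm, hx0 k]; show _ = (0:ℝ); ring) hz0
        · exact absurd (funext fun k => by
            rw [h1] at hm
            rw [hzc k, ← hm, hx0 k]; ring : y = z) hyz
    · -- Case D: x = y
      push_neg at h01
      refine absurd (funext fun k => ?_ : x = y) hxy
      rcases hx k with h1 | h1 <;> rcases hy k with h2 | h2
      · rw [h1, h2]
      · exact absurd h2 (h01 k h1)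
      · exact absurd h2 (h10 k h1)
      · rw [h1, h2]
end

section
/- Let G be an even cycle of length 2ℓ whose edges are each colored red or blue, let M₀ be the perfect matching of even-indexed edges and M₁ the perfect matching of odd-indexed edges, and let r₀ = |M₀ ∩ R|, r₁ = |M₁ ∩ R| be the numbers of red edges in each. Then for every integer k with min(r₀, r₁) ≤ k ≤ max(r₀, r₁), there exists a matching M of G with |M| ≥ ℓ − 1 and exactly k red edges. -/
/-!
Walk from `M₀` to `M₁` through the near-perfect matchings that use the odd edges before some
point of the cycle and the even edges after it. Consecutive matchings of this walk differ by
removing one edge and adding one, so the number of red edges changes by at most one per step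
and, by a discrete intermediate value argument, takes every value between `r₀` and `r₁`.
-/

open Finset

theorem Nat.exists_eq_of_forall_le_succ_add_one (g : ℕ → ℕ) (n k : ℕ)
    (hstep : ∀ t < n, g (t + 1) ≤ g t + 1 ∧ g t ≤ g (t + 1) + 1)
    (hk₁ : min (g 0) (g n) ≤ k) (hk₂ : k ≤ max (g 0) (g n)) : ∃ t ≤ n, g t = k := by
  induction n with
  | zero => exact ⟨0, le_rfl, by omega⟩
  | succ n ih =>
    by_cases hk : min (g 0) (g n) ≤ k ∧ k ≤ max (g 0) (g n)
    · obtain ⟨t, htn, ht⟩ := ih (fun t ht => hstep t (by omega)) hk.1 hk.2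
      exact ⟨t, by omega, ht⟩
    · have := hstep n n.lt_succ_self
      exact ⟨n + 1, le_rfl, by omega⟩

theorem Finset.card_filter_le_card_filter_add_one {α : Type*} [DecidableEq α] {s t : Finset α}
    {a : α} (p : α → Prop) [DecidablePred p] (h : s ⊆ insert a t) :
    #(s.filter p) ≤ #(t.filter p) + 1 :=
  calc #(s.filter p) ≤ #((insert a t).filter p) := card_le_card (filter_subset_filter p h)
    _ ≤ #(insert a (t.filter p)) :=
        card_le_card fun x => by simp only [mem_filter, mem_insert]; tauto
    _ ≤ #(t.filter p) + 1 := card_insert_le a _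

/-- For `1 ≤ t ≤ l`: the odd edges before `2t-2` and the even edges from `2t` on, so that only
the edges `2t-2`, `2t-1` are missed. `t = 0` gives all even edges and `t = l+1` all odd edges. -/
def mixedMatching (l t : ℕ) : Finset ℕ :=
  (range (2 * l)).filter fun i => i % 2 = 1 ∧ i + 1 < 2 * t ∨ i % 2 = 0 ∧ 2 * t ≤ i

section mixedMatching

variable {l t i : ℕ}

theorem mem_mixedMatching :
    i ∈ mixedMatching l t ↔ i < 2 * l ∧ (i % 2 = 1 ∧ i + 1 < 2 * t ∨ i % 2 = 0 ∧ 2 * t ≤ i) := by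
  rw [mixedMatching, mem_filter, mem_range]

theorem mixedMatching_zero (l : ℕ) :
    mixedMatching l 0 = (range (2 * l)).filter fun i => i % 2 = 0 :=
  filter_congr fun i _ => by omega

theorem mixedMatching_succ_self (l : ℕ) :
    mixedMatching l (l + 1) = (range (2 * l)).filter fun i => i % 2 = 1 :=
  filter_congr fun i hi => by rw [mem_range] at hi; omega

theorem mixedMatching_succ_subset :
    mixedMatching l (t + 1) ⊆ insert (2 * t - 1) (mixedMatching l t) := by
  intro i
  simp only [mem_insert, mem_mixedMatching]
  omega

theorem mixedMatching_subset_succ :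
    mixedMatching l t ⊆ insert (2 * t) (mixedMatching l (t + 1)) := by
  intro i
  simp only [mem_insert, mem_mixedMatching]
  omega

theorem succ_mod_notMem_mixedMatching (h : i ∈ mixedMatching l t) :
    (i + 1) % (2 * l) ∉ mixedMatching l t := by
  rw [mem_mixedMatching] at h ⊢
  rcases Nat.lt_or_ge (i + 1) (2 * l) with hi | hi
  · rw [Nat.mod_eq_of_lt hi]
    omega
  · rw [show i + 1 = 2 * l by omega, Nat.mod_self]
    omega

theorem le_card_mixedMatching (l t : ℕ) : l - 1 ≤ #(mixedMatching l t) := by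
  -- every pair of edges `{2m, 2m+1}` with `m ≠ t-1` contributes the edge `f m`
  let f : ℕ → ℕ := fun m => if m < t then 2 * m + 1 else 2 * m
  calc l - 1 ≤ #((range l).erase (t - 1)) := by
        simpa only [card_range] using pred_card_le_card_erase (s := range l) (a := t - 1)
    _ ≤ #(mixedMatching l t) := by
        refine card_le_card_of_injOn f (fun m hm => ?_) (fun m _ m' _ hmm' => ?_)
        · simp only [mem_coe, mem_erase, mem_range] at hm
          simp only [mem_coe, mem_mixedMatching, f]
          split_ifs <;> omega
        · simp only [f] at hmm'
          split_ifs at hmm' <;> omega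

end mixedMatching

theorem stmt3_general (l : ℕ) (c : ℕ → Bool) (r0 r1 k : ℕ)
    (hr0 : r0 = ((Finset.range (2 * l)).filter (fun i => i % 2 = 0 ∧ c i = true)).card)
    (hr1 : r1 = ((Finset.range (2 * l)).filter (fun i => i % 2 = 1 ∧ c i = true)).card)
    (hk1 : min r0 r1 ≤ k) (hk2 : k ≤ max r0 r1) :
    ∃ M : Finset ℕ, M ⊆ Finset.range (2 * l) ∧
      (∀ i ∈ M, (i + 1) % (2 * l) ∉ M) ∧
      l - 1 ≤ M.card ∧
      (M.filter (fun i => c i = true)).card = k := by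
  let red : ℕ → ℕ := fun t => #((mixedMatching l t).filter fun i => c i = true)
  have red_zero : red 0 = r0 := by simp only [red, mixedMatching_zero, filter_filter, hr0]
  have red_last : red (l + 1) = r1 := by
    simp only [red, mixedMatching_succ_self, filter_filter, hr1]
  obtain ⟨t, -, ht⟩ := Nat.exists_eq_of_forall_le_succ_add_one red (l + 1) k
    (fun t _ => ⟨card_filter_le_card_filter_add_one _ mixedMatching_succ_subset,
      card_filter_le_card_filter_add_one _ mixedMatching_subset_succ⟩)
    (by rwa [red_zero, red_last]) (by rwa [red_zero, red_last])
  exact ⟨mixedMatching l t, filter_subset _ _, fun _ => succ_mod_notMem_mixedMatching,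
    le_card_mixedMatching l t, ht⟩

/-- Edges of the even cycle of length `2*l` are indexed by `{0, …, 2*l-1}`;
edge `i` is adjacent to edge `(i+1) % (2*l)`. `c i = true` means edge `i` is red. -/
theorem stmt3 (l : ℕ) (hl : 1 ≤ l) (c : ℕ → Bool) (r0 r1 k : ℕ)
    (hr0 : r0 = ((Finset.range (2 * l)).filter (fun i => i % 2 = 0 ∧ c i = true)).card)
    (hr1 : r1 = ((Finset.range (2 * l)).filter (fun i => i % 2 = 1 ∧ c i = true)).card)
    (hk1 : min r0 r1 ≤ k) (hk2 : k ≤ max r0 r1) :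
    ∃ M : Finset ℕ, M ⊆ Finset.range (2 * l) ∧
      (∀ i ∈ M, (i + 1) % (2 * l) ∉ M) ∧
      l - 1 ≤ M.card ∧
      (M.filter (fun i => c i = true)).card = k :=
  stmt3_general l c r0 r1 k hr0 hr1 hk1 hk2
end

section
/- Let d : {0,…,ℓ} → ℤ² with d(0)=(0,0) and each increment d(t)−d(t−1) in {(0,±1), (±1,0), (−1,1), (1,−1)}, extended piecewise-linearly to [0,ℓ]. Let d̄(t) = d(t) + w for a fixed integer vector w ∈ ℤ². If d(u) = d̄(v) for some u, v ∈ [0, ℓ], then there exist integers u', v' ∈ {0,…,ℓ} with d(u') = d̄(v'). -/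
/-!
The six steps are the edges at a vertex of the triangular lattice (ℤ² with the extra diagonal
direction `(1, -1)`). A point of `D` lies on an edge `d i + s • a`, a point of `D + w` on an edge
`d j + w + r • b`, with `s, r ∈ [0, 1)`. If they coincide, `m = d j + w - d i = s • a - r • b` is a
lattice vector. Its cross product with `a` is `-r (a × b)`, an integer of absolute value `< 1`,
hence `0`; so `r = 0` or `b = ± a`, and `m = (s ∓ r) • a`. As `a` is primitive, `s ∓ r` is an
integer, which the bounds force to be `0` or `1`: then `d i` or `d (i + 1)` equals `d j + w`.
-/

def triangularSteps : Set (ℤ × ℤ) := {(0, 1), (0, -1), (1, 0), (-1, 0), (-1, 1), (1, -1)}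

def castR2 : ℤ × ℤ →+ ℝ × ℝ := (Int.castAddHom ℝ).prodMap (Int.castAddHom ℝ)

@[simp] lemma castR2_apply (p : ℤ × ℤ) : castR2 p = ((p.1 : ℝ), (p.2 : ℝ)) := rfl

lemma castR2_injective : Function.Injective castR2 := by
  intro p q h
  simp only [castR2_apply, Prod.mk.injEq, Int.cast_inj] at h
  exact Prod.ext h.1 h.2

namespace triangularSteps

variable {a b : ℤ × ℤ}

lemma abs_cross_le_one (ha : a ∈ triangularSteps) (hb : b ∈ triangularSteps) :
    |a.1 * b.2 - a.2 * b.1| ≤ 1 := by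
  simp only [triangularSteps, Set.mem_insert_iff, Set.mem_singleton_iff] at ha hb
  rcases ha with rfl | rfl | rfl | rfl | rfl | rfl <;>
    rcases hb with rfl | rfl | rfl | rfl | rfl | rfl <;> decide

lemma eq_or_eq_neg_of_cross_eq_zero (ha : a ∈ triangularSteps) (hb : b ∈ triangularSteps)
    (h : a.1 * b.2 - a.2 * b.1 = 0) : b = a ∨ b = -a := by
  simp only [triangularSteps, Set.mem_insert_iff, Set.mem_singleton_iff] at ha hb
  rcases ha with rfl | rfl | rfl | rfl | rfl | rfl <;>
    rcases hb with rfl | rfl | rfl | rfl | rfl | rfl <;> revert h <;> decide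

lemma fst_sq_eq_one_or_snd_sq_eq_one (ha : a ∈ triangularSteps) : a.1 ^ 2 = 1 ∨ a.2 ^ 2 = 1 := by
  simp only [triangularSteps, Set.mem_insert_iff, Set.mem_singleton_iff] at ha
  rcases ha with rfl | rfl | rfl | rfl | rfl | rfl <;> decide

lemma exists_int_of_castR2_eq_smul (ha : a ∈ triangularSteps) {m : ℤ × ℤ} {t : ℝ}
    (h : castR2 m = t • castR2 a) : ∃ k : ℤ, t = k ∧ m = k • a := by
  simp only [castR2_apply, Prod.smul_mk, smul_eq_mul, Prod.mk.injEq] at h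
  obtain ⟨h1, h2⟩ := h
  have exists_int : ∃ k : ℤ, t = k := by
    rcases fst_sq_eq_one_or_snd_sq_eq_one ha with ha1 | ha2
    · refine ⟨a.1 * m.1, ?_⟩
      have : (a.1 : ℝ) ^ 2 = 1 := by exact_mod_cast ha1
      push_cast
      linear_combination (-a.1 : ℝ) * h1 - t * this
    · refine ⟨a.2 * m.2, ?_⟩
      have : (a.2 : ℝ) ^ 2 = 1 := by exact_mod_cast ha2
      push_cast
      linear_combination (-a.2 : ℝ) * h2 - t * this
  obtain ⟨k, rfl⟩ := exists_int
  refine ⟨k, rfl, castR2_injective ?_⟩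
  simp [h1, h2]

lemma smul_castR2_eq_or_eq_neg_of_castR2_eq (ha : a ∈ triangularSteps)
    (hb : b ∈ triangularSteps) {m : ℤ × ℤ} {s r : ℝ} (hr0 : 0 ≤ r) (hr1 : r < 1)
    (h : castR2 m = s • castR2 a - r • castR2 b) :
    r • castR2 b = r • castR2 a ∨ r • castR2 b = (-r) • castR2 a := by
  have hcross : ((a.1 * m.2 - a.2 * m.1 : ℤ) : ℝ) = -r * ((a.1 * b.2 - a.2 * b.1 : ℤ) : ℝ) := by
    simp only [castR2_apply, Prod.smul_mk, smul_eq_mul, Prod.mk_sub_mk, Prod.mk.injEq] at h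
    push_cast
    linear_combination (a.1 : ℝ) * h.2 - (a.2 : ℝ) * h.1
  have hrc : r * ((a.1 * b.2 - a.2 * b.1 : ℤ) : ℝ) = 0 := by
    have hc : |((a.1 * b.2 - a.2 * b.1 : ℤ) : ℝ)| ≤ 1 := by exact_mod_cast abs_cross_le_one ha hb
    have hlt : |((a.1 * m.2 - a.2 * m.1 : ℤ) : ℝ)| < 1 := by
      rw [hcross, abs_mul, abs_neg, abs_of_nonneg hr0]
      nlinarith [abs_nonneg ((a.1 * b.2 - a.2 * b.1 : ℤ) : ℝ)]
    have hzero : a.1 * m.2 - a.2 * m.1 = 0 := by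
      rw [← Int.cast_abs, ← Int.cast_one, Int.cast_lt] at hlt
      exact Int.abs_lt_one_iff.mp hlt
    linear_combination hcross - (by exact_mod_cast hzero : ((a.1 * m.2 - a.2 * m.1 : ℤ) : ℝ) = 0)
  rcases mul_eq_zero.mp hrc with hr | hc
  · simp [hr]
  · rcases eq_or_eq_neg_of_cross_eq_zero ha hb (by exact_mod_cast hc) with rfl | rfl
    · exact Or.inl rfl
    · exact Or.inr (by rw [map_neg, smul_neg, neg_smul])

lemma eq_zero_or_eq_of_castR2_eq (ha : a ∈ triangularSteps) (hb : b ∈ triangularSteps)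
    {m : ℤ × ℤ} {s r : ℝ} (hs0 : 0 ≤ s) (hs1 : s < 1) (hr0 : 0 ≤ r) (hr1 : r < 1)
    (h : castR2 m = s • castR2 a - r • castR2 b) : m = 0 ∨ (m = a ∧ 0 < s) := by
  rcases smul_castR2_eq_or_eq_neg_of_castR2_eq ha hb hr0 hr1 h with hrb | hrb <;>
    rw [hrb, ← sub_smul] at h <;> obtain ⟨k, hk, rfl⟩ := exists_int_of_castR2_eq_smul ha h
  · have hk0 : -1 < k := by exact_mod_cast (by linarith : (-1 : ℝ) < k)
    have hk1 : k < 1 := by exact_mod_cast (by linarith : (k : ℝ) < 1)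
    simp [show k = 0 by omega]
  · have hk0 : 0 ≤ k := by exact_mod_cast (by linarith : (0 : ℝ) ≤ k)
    have hk2 : k < 2 := by exact_mod_cast (by linarith : (k : ℝ) < 2)
    obtain rfl | rfl : k = 0 ∨ k = 1 := by omega
    · simp
    · exact Or.inr ⟨one_smul _ _, by push_cast at hk; linarith⟩

end triangularSteps

def IsLinearInterpolation (l : ℕ) (d : ℕ → ℤ × ℤ) (D : ℝ → ℝ × ℝ) : Prop :=
  ∀ t : ℝ, 0 ≤ t → t ≤ l →
    D t = (1 - Int.fract t) • castR2 (d ⌊t⌋.toNat) + Int.fract t • castR2 (d ⌈t⌉.toNat)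

lemma IsLinearInterpolation.exists_eq_add_smul {l : ℕ} {d : ℕ → ℤ × ℤ} {D : ℝ → ℝ × ℝ}
    (hD : IsLinearInterpolation l d D)
    (hstep : ∀ t, 1 ≤ t → t ≤ l → d t - d (t - 1) ∈ triangularSteps)
    {t : ℝ} (ht0 : 0 ≤ t) (htl : t ≤ l) :
    ∃ i ≤ l, ∃ s : ℝ, ∃ a ∈ triangularSteps, 0 ≤ s ∧ s < 1 ∧
      D t = castR2 (d i) + s • castR2 a ∧ (0 < s → i + 1 ≤ l ∧ d (i + 1) = d i + a) := by
  have hfloor : (⌊t⌋.toNat : ℤ) = ⌊t⌋ := Int.toNat_of_nonneg (Int.floor_nonneg.mpr ht0)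
  have hil : ⌊t⌋.toNat ≤ l := by
    have : ⌊t⌋ ≤ l := (Int.floor_mono htl).trans_eq (Int.floor_natCast l)
    omega
  by_cases hfract : Int.fract t = 0
  · refine ⟨_, hil, 0, (1, 0), by simp [triangularSteps], le_rfl, one_pos, ?_, fun h => h.false.elim⟩
    simp [hD t ht0 htl, hfract]
  have hceil : ⌈t⌉ = ⌊t⌋ + 1 :=
    (Int.ceil_eq_floor_add_one_iff_notMem t).mpr (mt Int.fract_eq_zero_iff.mpr hfract)
  have hi1 : ⌊t⌋.toNat + 1 ≤ l := by
    have : ⌈t⌉ ≤ l := Int.ceil_le.mpr htl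
    omega
  have hceil' : ⌈t⌉.toNat = ⌊t⌋.toNat + 1 := by omega
  refine ⟨_, hil, Int.fract t, d (⌊t⌋.toNat + 1) - d ⌊t⌋.toNat,
    by simpa using hstep _ (by omega) hi1, Int.fract_nonneg t, Int.fract_lt_one t, ?_,
    fun _ => ⟨hi1, by abel⟩⟩
  rw [hD t ht0 htl, hceil', map_sub, smul_sub, sub_smul, one_smul]
  abel

theorem stmt5_general (l : ℕ) (d : ℕ → ℤ × ℤ) (w : ℤ × ℤ)
    (hstep : ∀ t, 1 ≤ t → t ≤ l → d t - d (t - 1) ∈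
      ({(0, 1), (0, -1), (1, 0), (-1, 0), (-1, 1), (1, -1)} : Set (ℤ × ℤ)))
    (D : ℝ → ℝ × ℝ)
    (hD : ∀ t : ℝ, 0 ≤ t → t ≤ l →
      D t = (1 - (t - ⌊t⌋)) • (((d ⌊t⌋.toNat).1 : ℝ), ((d ⌊t⌋.toNat).2 : ℝ)) +
            (t - ⌊t⌋) • (((d ⌈t⌉.toNat).1 : ℝ), ((d ⌈t⌉.toNat).2 : ℝ)))
    (u v : ℝ) (hu : u ∈ Set.Icc (0 : ℝ) l) (hv : v ∈ Set.Icc (0 : ℝ) l)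
    (huv : D u = D v + ((w.1 : ℝ), (w.2 : ℝ))) :
    ∃ u' v' : ℕ, u' ≤ l ∧ v' ≤ l ∧ d u' = d v' + w := by
  have hD' : IsLinearInterpolation l d D := hD
  obtain ⟨i, hil, s, a, ha, hs0, hs1, hDu, hnext⟩ := hD'.exists_eq_add_smul hstep hu.1 hu.2
  obtain ⟨j, hjl, r, b, hb, hr0, hr1, hDv, -⟩ := hD'.exists_eq_add_smul hstep hv.1 hv.2
  have hm : castR2 (d j + w - d i) = s • castR2 a - r • castR2 b := by
    rw [hDu, hDv, ← castR2_apply w] at huv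
    rw [map_sub, map_add]
    linear_combination (norm := module) -huv
  rcases triangularSteps.eq_zero_or_eq_of_castR2_eq ha hb hs0 hs1 hr0 hr1 hm with h | ⟨h, hs⟩
  · exact ⟨i, j, hil, hjl, (sub_eq_zero.mp h).symm⟩
  · obtain ⟨hi1, hdi1⟩ := hnext hs
    exact ⟨i + 1, j, hi1, hjl, by rw [hdi1, ← h]; abel⟩

/-- `D` is the piecewise-linear interpolation on `[0, l]` of the lattice path `d`,
and `D · + w` is the translate of `D` by the integer vector `w`. -/
theorem stmt5 (l : ℕ) (d : ℕ → ℤ × ℤ) (w : ℤ × ℤ) (hd0 : d 0 = (0, 0))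
    (hstep : ∀ t, 1 ≤ t → t ≤ l → d t - d (t - 1) ∈
      ({(0, 1), (0, -1), (1, 0), (-1, 0), (-1, 1), (1, -1)} : Set (ℤ × ℤ)))
    (D : ℝ → ℝ × ℝ)
    (hD : ∀ t : ℝ, 0 ≤ t → t ≤ l →
      D t = (1 - (t - ⌊t⌋)) • (((d ⌊t⌋.toNat).1 : ℝ), ((d ⌊t⌋.toNat).2 : ℝ)) +
            (t - ⌊t⌋) • (((d ⌈t⌉.toNat).1 : ℝ), ((d ⌈t⌉.toNat).2 : ℝ)))
    (u v : ℝ) (hu : u ∈ Set.Icc (0 : ℝ) l) (hv : v ∈ Set.Icc (0 : ℝ) l)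
    (huv : D u = D v + ((w.1 : ℝ), (w.2 : ℝ))) :
    ∃ u' v' : ℕ, u' ≤ l ∧ v' ≤ l ∧ d u' = d v' + w :=
  stmt5_general l d w hstep D hD u v hu hv huv
end

section
/- Let f : [0, τ] → ℝ² be continuous with f(0) ≠ f(τ), and define its periodic extension f^∞ : ℝ → ℝ² by f^∞(kτ + r) = k·(f(τ) − f(0)) + f(r) for k ∈ ℤ and 0 ≤ r < τ. Then f^∞ is continuous, and f^∞(t + τ) = f^∞(t) + (f(τ) − f(0)) for all t ∈ ℝ. Moreover, if f^∞ is injective then ‖f^∞(t)‖ → ∞ as t → ±∞. -/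
open Set Filter

/-- `F` is the periodic extension of `f : [0, τ] → ℝ²`. -/
theorem stmt7 (τ : ℝ) (hτ : 0 < τ) (f F : ℝ → ℝ × ℝ)
    (hf : ContinuousOn f (Set.Icc 0 τ)) (hne : f 0 ≠ f τ)
    (hF : ∀ (k : ℤ) (r : ℝ), 0 ≤ r → r < τ →
      F (k * τ + r) = k • (f τ - f 0) + f r) :
    Continuous F ∧
    (∀ t : ℝ, F (t + τ) = F t + (f τ - f 0)) ∧
    (Function.Injective F →
      Filter.Tendsto (fun t => ‖F t‖) Filter.atTop Filter.atTop ∧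
      Filter.Tendsto (fun t => ‖F t‖) Filter.atBot Filter.atTop) := by
  set Δ : ℝ × ℝ := f τ - f 0 with hΔdef
  have hΔ : Δ ≠ 0 := sub_ne_zero.mpr (Ne.symm hne)
  -- F on each closed interval [kτ, (k+1)τ]
  have hIcc : ∀ (k : ℤ) (t : ℝ), t ∈ Icc ((k : ℝ) * τ) ((k + 1 : ℤ) * τ) →
      F t = k • Δ + f (t - k * τ) := by
    intro k t ht
    rcases lt_or_eq_of_le ht.2 with h | h
    · have h0 : (0:ℝ) ≤ t - k * τ := by linarith [ht.1]
      have h1 : t - k * τ < τ := by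
        have : ((k + 1 : ℤ) : ℝ) * τ = k * τ + τ := by push_cast; ring
        linarith [this ▸ h]
      have := hF k (t - k * τ) h0 h1
      simpa using this
    · have h1 : F (((k + 1 : ℤ) : ℝ) * τ + 0) = (k + 1 : ℤ) • Δ + f 0 :=
        hF (k + 1) 0 le_rfl hτ
      have hcast : ((k + 1 : ℤ) : ℝ) * τ = k * τ + τ := by push_cast; ring
      have h2 : t - k * τ = τ := by rw [h, hcast]; ring
      rw [h2]
      have h3 : F t = (k + 1 : ℤ) • Δ + f 0 := by rw [h]; simpa using h1
      rw [h3, add_smul, one_smul]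
      rw [hΔdef]
      abel
  -- continuity of shifted pieces
  have hg : ∀ k : ℤ, ContinuousOn (fun t => k • Δ + f (t - k * τ))
      (Icc ((k : ℝ) * τ) ((k + 1 : ℤ) * τ)) := by
    intro k
    apply continuousOn_const.add
    apply hf.comp (Continuous.continuousOn (by continuity))
    intro t ht
    simp only [Set.mem_Icc] at ht ⊢
    have hcast : ((k + 1 : ℤ) : ℝ) * τ = k * τ + τ := by push_cast; ring
    rw [hcast] at ht
    exact ⟨by linarith [ht.1], by linarith [ht.2]⟩
  have hFcont : ∀ k : ℤ, ContinuousOn F (Icc ((k : ℝ) * τ) ((k + 1 : ℤ) * τ)) :=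
    fun k => (hg k).congr (hIcc k)
  have key : ∀ t : ℝ, F t = ⌊t / τ⌋ • Δ + f (t - ⌊t / τ⌋ * τ) := by
    intro t
    apply hIcc
    constructor
    · have := Int.floor_le (t / τ)
      calc (⌊t / τ⌋ : ℝ) * τ ≤ (t / τ) * τ := by nlinarith
        _ = t := by field_simp
    · have := Int.lt_floor_add_one (t / τ)
      have h2 : t / τ * τ = t := by field_simp
      push_cast
      nlinarith
  have hcont : Continuous F := by
    rw [continuous_iff_continuousAt]
    intro t
    set k := ⌊t / τ⌋ with hk
    have h1 : (k : ℝ) * τ ≤ t := by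
      have := Int.floor_le (t / τ)
      calc (k : ℝ) * τ ≤ (t / τ) * τ := by nlinarith
        _ = t := by field_simp
    have h2 : t < ((k + 1 : ℤ) : ℝ) * τ := by
      have := Int.lt_floor_add_one (t / τ)
      have h2 : t / τ * τ = t := by field_simp
      push_cast
      nlinarith
    rcases lt_or_eq_of_le h1 with h | h
    · exact (hFcont k).continuousAt (Icc_mem_nhds h h2)
    · -- t = k * τ : glue left and right
      rw [continuousAt_iff_continuous_left_right]
      constructor
      · -- left: use interval [(k-1)τ, kτ]
        have ht : t ∈ Ioc (((k - 1 : ℤ) : ℝ) * τ) (((k - 1 + 1 : ℤ) : ℝ) * τ) := by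
          constructor
          · push_cast; nlinarith [h.symm]
          · push_cast; nlinarith [h.symm]
        have := (hFcont (k - 1)) t ⟨le_of_lt ht.1, ht.2⟩
        exact this.mono_of_mem_nhdsWithin (Icc_mem_nhdsLE_of_mem ht)
      · have ht : t ∈ Ico ((k : ℝ) * τ) (((k + 1 : ℤ) : ℝ) * τ) := ⟨le_of_eq h, h2⟩
        have := (hFcont k) t ⟨ht.1, le_of_lt ht.2⟩
        exact this.mono_of_mem_nhdsWithin (Icc_mem_nhdsGE_of_mem ht)
  have hper : ∀ t : ℝ, F (t + τ) = F t + Δ := by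
    intro t
    have h1 := key t
    have h0 : (0:ℝ) ≤ t - ⌊t / τ⌋ * τ := by
      have := Int.floor_le (t / τ)
      nlinarith [(by field_simp : t / τ * τ = t)]
    have h1' : t - ⌊t / τ⌋ * τ < τ := by
      have := Int.lt_floor_add_one (t / τ)
      nlinarith [(by field_simp : t / τ * τ = t)]
    have h2 : F ((⌊t / τ⌋ + 1 : ℤ) * τ + (t - ⌊t / τ⌋ * τ)) =
        (⌊t / τ⌋ + 1 : ℤ) • Δ + f (t - ⌊t / τ⌋ * τ) := hF _ _ h0 h1'
    have h3 : ((⌊t / τ⌋ + 1 : ℤ) : ℝ) * τ + (t - ⌊t / τ⌋ * τ) = t + τ := by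
      push_cast; ring
    rw [h3] at h2
    rw [h2, h1, add_smul, one_smul]
    abel
  refine ⟨hcont, hper, fun _ => ?_⟩
  -- bound on f
  obtain ⟨M, hM⟩ := (isCompact_Icc.exists_bound_of_continuousOn hf)
  have hΔn : 0 < ‖Δ‖ := norm_pos_iff.mpr hΔ
  have hbound : ∀ t : ℝ, |(⌊t / τ⌋ : ℝ)| * ‖Δ‖ - M ≤ ‖F t‖ := by
    intro t
    have h0 : (0:ℝ) ≤ t - ⌊t / τ⌋ * τ := by
      have := Int.floor_le (t / τ)
      nlinarith [(by field_simp : t / τ * τ = t)]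
    have h1' : t - ⌊t / τ⌋ * τ < τ := by
      have := Int.lt_floor_add_one (t / τ)
      nlinarith [(by field_simp : t / τ * τ = t)]
    have hMf : ‖f (t - ⌊t / τ⌋ * τ)‖ ≤ M := hM _ ⟨h0, le_of_lt h1'⟩
    have hnorm : ‖(⌊t / τ⌋ : ℤ) • Δ‖ = |(⌊t / τ⌋ : ℝ)| * ‖Δ‖ := by
      rw [← Int.cast_smul_eq_zsmul ℝ, norm_smul, Real.norm_eq_abs]
    have htri : ‖(⌊t / τ⌋ : ℤ) • Δ‖ ≤ ‖F t‖ + ‖f (t - ⌊t / τ⌋ * τ)‖ := by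
      have : (⌊t / τ⌋ : ℤ) • Δ = F t - f (t - ⌊t / τ⌋ * τ) := by rw [key t]; abel
      rw [this]
      exact norm_sub_le _ _
    linarith [hnorm ▸ htri]
  have hlow1 : ∀ t : ℝ, (t / τ - 1) * ‖Δ‖ - M ≤ ‖F t‖ := by
    intro t
    have h1 : t / τ - 1 ≤ |(⌊t / τ⌋ : ℝ)| :=
      le_trans (by linarith [Int.lt_floor_add_one (t / τ)]) (le_abs_self _)
    nlinarith [hbound t, hΔn.le]
  have hlow2 : ∀ t : ℝ, (-(t / τ)) * ‖Δ‖ - M ≤ ‖F t‖ := by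
    intro t
    have h1 : -(t / τ) ≤ |(⌊t / τ⌋ : ℝ)| := by
      linarith [Int.floor_le (t / τ), neg_le_abs ((⌊t / τ⌋ : ℝ))]
    nlinarith [hbound t, hΔn.le]
  constructor
  · have t1 : Tendsto (fun t : ℝ => t / τ - 1) atTop atTop := by
      simpa [sub_eq_add_neg] using
        tendsto_atTop_add_const_right atTop (-1 : ℝ) (tendsto_id.atTop_div_const hτ)
    have t2 := t1.atTop_mul_const hΔn
    have t3 : Tendsto (fun t : ℝ => (t / τ - 1) * ‖Δ‖ - M) atTop atTop := by
      simpa [sub_eq_add_neg] using tendsto_atTop_add_const_right atTop (-M) t2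
    exact tendsto_atTop_mono hlow1 t3
  · have t1 : Tendsto (fun t : ℝ => -(t / τ)) atBot atTop := by
      have := (tendsto_id (α := ℝ)).atBot_div_const hτ
      exact tendsto_neg_atBot_atTop.comp this
    have t2 := t1.atTop_mul_const hΔn
    have t3 : Tendsto (fun t : ℝ => (-(t / τ)) * ‖Δ‖ - M) atBot atTop := by
      simpa [sub_eq_add_neg] using tendsto_atTop_add_const_right atBot (-M) t2
    exact tendsto_atTop_mono hlow2 t3
end

section
/- Let f : [0, τ] → ℝ² be a continuous piecewise-linear map whose periodic extension f^∞ (defined by f^∞(kτ + r) = k(f(τ) − f(0)) + f(r)) is injective; assume f(0) = (0,0), f₂(τ) = 0, f₁(τ) > 0, and min over t ∈ ℝ of f^∞₂(t) equals 0, where f^∞ = (f^∞₁, f^∞₂). Then for all t₁ < t₂ in ℝ with f^∞₂(t₁) = f^∞₂(t₂) = 0 one has f^∞₁(t₁) < f^∞₁(t₂). -/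
/-!
Suppose `t₁ < t₂` are zeros of `F₂` with `F t₂` to the left of `F t₁`. Shifting `t₂` by whole
periods gives a zero `s > t₁ + τ` with `F s` strictly between `F t₁` and `F (t₁ + τ)` on the axis.
The arc `F [t₁, t₁ + τ]` lies in the closed upper half-plane and is polygonal, since `f` is
piecewise linear; closing it through the lower half-plane gives a polygon. The vertical ray going
down from `F s` crosses the polygon once, the ray from a point far to the right does not cross it
at all, and the parity of the number of crossings is locally constant off the polygon. But by
injectivity `F` maps `[s, ∞)` into the complement of the polygon, and it reaches the far right.
-/

open Set Filter Topology

noncomputable section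

def lineHeight (P Q : ℝ × ℝ) (x : ℝ) : ℝ := P.2 + (x - P.1) / (Q.1 - P.1) * (Q.2 - P.2)

/-- The vertical ray going down from `p` meets the edge `[P, Q]`. The abscissa range of the edge is
taken half-open, so that a ray through a vertex shared by two edges is counted once. -/
def RayCrosses (p P Q : ℝ × ℝ) : Prop :=
  (P.1 ≤ p.1 ∧ p.1 < Q.1 ∨ Q.1 ≤ p.1 ∧ p.1 < P.1) ∧ lineHeight P Q p.1 < p.2

open scoped Classical in
def edgeParity (p P Q : ℝ × ℝ) : ZMod 2 := if RayCrosses p P Q then 1 else 0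

def belowParity (p v : ℝ × ℝ) : ZMod 2 := if v.1 = p.1 ∧ v.2 < p.2 then 1 else 0

def chainParity (V : ℕ → ℝ × ℝ) (n : ℕ) (p : ℝ × ℝ) : ZMod 2 :=
  ∑ i ∈ Finset.range n, edgeParity p (V i) (V (i + 1))

lemma lineHeight_left (P Q : ℝ × ℝ) : lineHeight P Q P.1 = P.2 := by
  simp [lineHeight]

lemma lineHeight_comm {P Q : ℝ × ℝ} (h : P.1 ≠ Q.1) : lineHeight Q P = lineHeight P Q := by
  have h' : Q.1 - P.1 ≠ 0 := sub_ne_zero.2 h.symm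
  have h'' : P.1 - Q.1 ≠ 0 := sub_ne_zero.2 h
  ext x
  simp only [lineHeight]
  field_simp
  ring

lemma lineHeight_right {P Q : ℝ × ℝ} (h : P.1 ≠ Q.1) : lineHeight P Q Q.1 = Q.2 := by
  rw [← lineHeight_comm h, lineHeight_left]

lemma continuous_lineHeight (P Q : ℝ × ℝ) : Continuous (lineHeight P Q) := by
  unfold lineHeight; fun_prop

lemma RayCrosses.fst_ne {p P Q : ℝ × ℝ} (h : RayCrosses p P Q) : P.1 ≠ Q.1 := by
  rcases h.1 with h | h <;> linarith [h.1, h.2]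

lemma rayCrosses_comm {p P Q : ℝ × ℝ} : RayCrosses p P Q ↔ RayCrosses p Q P := by
  constructor <;>
  · intro h
    exact ⟨h.1.symm, by rw [lineHeight_comm h.fst_ne]; exact h.2⟩

lemma rayCrosses_iff_of_lt {p P Q : ℝ × ℝ} (h : P.1 < Q.1) :
    RayCrosses p P Q ↔ P.1 ≤ p.1 ∧ p.1 < Q.1 ∧ lineHeight P Q p.1 < p.2 := by
  unfold RayCrosses
  constructor
  · rintro ⟨⟨h₁, h₂⟩ | ⟨h₁, h₂⟩, h₃⟩
    · exact ⟨h₁, h₂, h₃⟩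
    · linarith
  · rintro ⟨h₁, h₂, h₃⟩
    exact ⟨Or.inl ⟨h₁, h₂⟩, h₃⟩

lemma mk_lineHeight_mem_segment {P Q : ℝ × ℝ} {x : ℝ} (h : P.1 < Q.1) (hx : x ∈ Icc P.1 Q.1) :
    (x, lineHeight P Q x) ∈ segment ℝ P Q := by
  have hPQ : 0 < Q.1 - P.1 := sub_pos.2 h
  rw [segment_eq_image_lineMap]
  refine ⟨(x - P.1) / (Q.1 - P.1), ⟨div_nonneg (by linarith [hx.1]) hPQ.le,
    (div_le_one hPQ).2 (by linarith [hx.2])⟩, ?_⟩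
  ext <;> simp [AffineMap.lineMap_apply, lineHeight] <;> field_simp <;> ring

lemma RayCrosses.exists_mem_segment {p P Q : ℝ × ℝ} (h : RayCrosses p P Q) :
    ∃ z ∈ segment ℝ P Q, z.1 = p.1 ∧ z.2 < p.2 := by
  wlog hPQ : P.1 < Q.1 generalizing P Q
  · obtain ⟨z, hz, hz'⟩ := this (rayCrosses_comm.1 h) (h.fst_ne.symm.lt_of_le (not_lt.1 hPQ))
    exact ⟨z, segment_symm ℝ Q P ▸ hz, hz'⟩
  obtain ⟨h₁, h₂, h₃⟩ := (rayCrosses_iff_of_lt hPQ).1 h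
  exact ⟨_, mk_lineHeight_mem_segment hPQ ⟨h₁, h₂.le⟩, rfl, h₃⟩

lemma snd_lt_iff_of_fst_eq {p P Q : ℝ × ℝ} (hP : P.1 = p.1) (hQ : Q.1 = p.1)
    (hp : p ∉ segment ℝ P Q) : P.2 < p.2 ↔ Q.2 < p.2 := by
  have hseg : segment ℝ P Q = (fun y => (p.1, y)) '' uIcc P.2 Q.2 := by
    rw [← segment_eq_uIcc, Prod.image_mk_segment_right]
    congr 1 <;> ext <;> simp [hP, hQ]
  have : p.2 ∉ uIcc P.2 Q.2 := fun h => hp (hseg ▸ ⟨p.2, h, rfl⟩)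
  rw [mem_uIcc] at this
  constructor
  · intro h; by_contra h'; exact this (Or.inl ⟨h.le, not_lt.1 h'⟩)
  · intro h; by_contra h'; exact this (Or.inr ⟨h.le, not_lt.1 h'⟩)

lemma eventually_lt_iff {X : Type*} [TopologicalSpace X] {f g : X → ℝ} {x : X}
    (hf : ContinuousAt f x) (hg : ContinuousAt g x) (hne : f x ≠ g x) :
    ∀ᶠ y in 𝓝 x, (f y < g y ↔ f x < g x) := by
  rcases hne.lt_or_gt with h | h
  · filter_upwards [hf.eventually_lt hg h] with y hy using iff_of_true hy h
  · filter_upwards [hg.eventually_lt hf h] with y hy using iff_of_false hy.not_gt h.not_gt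

open scoped Classical in
lemma edgeParity_comm (p P Q : ℝ × ℝ) : edgeParity p P Q = edgeParity p Q P :=
  if_congr rayCrosses_comm rfl rfl

lemma edgeParity_eq_zero_of_fst_eq {P Q : ℝ × ℝ} (h : P.1 = Q.1) (q : ℝ × ℝ) :
    edgeParity q P Q = 0 := by
  rw [edgeParity, if_neg]
  rintro ⟨⟨h₁, h₂⟩ | ⟨h₁, h₂⟩, -⟩ <;> linarith

lemma belowParity_eq_zero {p v : ℝ × ℝ} (h : v.1 ≠ p.1) : belowParity p v = 0 := by
  simp [belowParity, h]

lemma eventually_fst_lt_iff {p : ℝ × ℝ} {c : ℝ} (hc : p.1 ≠ c) :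
    ∀ᶠ q in 𝓝 p, (c ≤ q.1 ↔ c ≤ p.1) ∧ (q.1 < c ↔ p.1 < c) :=
  (eventually_lt_iff continuous_fst.continuousAt continuousAt_const hc).mono
    fun q hq => ⟨by simp only [← not_lt, hq], hq⟩

lemma eventually_lineHeight_lt_iff {p P Q : ℝ × ℝ} (hne : lineHeight P Q p.1 ≠ p.2) :
    ∀ᶠ q in 𝓝 p, (lineHeight P Q q.1 < q.2 ↔ lineHeight P Q p.1 < p.2) :=
  eventually_lt_iff ((continuous_lineHeight P Q).comp continuous_fst).continuousAt
    continuous_snd.continuousAt hne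

lemma edgeParity_eventually_eq_of_fst_eq {p P Q : ℝ × ℝ} (hp : p ∉ segment ℝ P Q)
    (hPQ : P.1 = Q.1) : ∀ᶠ q in 𝓝 p, edgeParity q P Q =
      edgeParity p P Q + if q.1 < p.1 then belowParity p P + belowParity p Q else 0 := by
  have hbelow : belowParity p P = belowParity p Q := by
    by_cases hP : P.1 = p.1
    · simp only [belowParity, hP, ← hPQ, true_and, snd_lt_iff_of_fst_eq hP (hPQ ▸ hP) hp]
    · rw [belowParity_eq_zero hP, belowParity_eq_zero (hPQ ▸ hP)]
  refine Eventually.of_forall fun q => ?_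
  simp [edgeParity_eq_zero_of_fst_eq hPQ, hbelow, CharTwo.add_self_eq_zero]

lemma edgeParity_eventually_eq_of_lt {p P Q : ℝ × ℝ} (hp : p ∉ segment ℝ P Q)
    (hPQ : P.1 < Q.1) : ∀ᶠ q in 𝓝 p, edgeParity q P Q =
      edgeParity p P Q + if q.1 < p.1 then belowParity p P + belowParity p Q else 0 := by
  simp only [edgeParity, rayCrosses_iff_of_lt hPQ]
  rcases lt_or_ge p.1 P.1 with hPp | hPp
  · filter_upwards [eventually_fst_lt_iff hPp.ne] with q hq
    simp [hq.1, hPp.not_ge, belowParity_eq_zero hPp.ne',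
      belowParity_eq_zero (by linarith : Q.1 ≠ p.1)]
  rcases lt_or_ge Q.1 p.1 with hpQ | hpQ
  · filter_upwards [eventually_fst_lt_iff hpQ.ne'] with q hq
    simp [hq.2, hpQ.not_gt, belowParity_eq_zero hpQ.ne,
      belowParity_eq_zero (by linarith : P.1 ≠ p.1)]
  have hne : lineHeight P Q p.1 ≠ p.2 := fun he =>
    hp (by simpa [he] using mk_lineHeight_mem_segment hPQ ⟨hPp, hpQ⟩)
  rcases hPp.eq_or_lt with hPp | hPp
  · have hbelow : belowParity p P = if lineHeight P Q p.1 < p.2 then 1 else 0 := by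
      simp [belowParity, ← hPp, lineHeight_left]
    filter_upwards [eventually_lineHeight_lt_iff hne,
      eventually_fst_lt_iff (c := Q.1) (by linarith)] with q hq hq'
    simp only [hbelow, belowParity_eq_zero (by linarith : Q.1 ≠ p.1), hq, hq'.2]
    rcases lt_or_ge q.1 p.1 with hqp | hqp
    · simp [hqp, (by linarith : ¬ P.1 ≤ q.1), hPp.le, hPp ▸ hPQ, CharTwo.add_self_eq_zero]
    · simp [hqp.not_gt, (by linarith : P.1 ≤ q.1), hPp.le]
  rcases hpQ.eq_or_lt with hpQ | hpQ
  · have hbelow : belowParity p Q = if lineHeight P Q p.1 < p.2 then 1 else 0 := by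
      simp [belowParity, hpQ, lineHeight_right hPQ.ne]
    filter_upwards [eventually_lineHeight_lt_iff hne, eventually_fst_lt_iff hPp.ne'] with q hq hq'
    simp only [hbelow, belowParity_eq_zero (by linarith : P.1 ≠ p.1), hq, hq'.1]
    rcases lt_or_ge q.1 p.1 with hqp | hqp
    · simp [hqp, hPp.le, (by linarith : q.1 < Q.1), (by linarith : ¬ p.1 < Q.1)]
    · simp [hqp.not_gt, (by linarith : ¬ q.1 < Q.1), (by linarith : ¬ p.1 < Q.1)]
  filter_upwards [eventually_lineHeight_lt_iff hne, eventually_fst_lt_iff hPp.ne',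
    eventually_fst_lt_iff hpQ.ne] with q hq hq' hq''
  simp [hq, hq'.1, hq''.2, hpQ, hPp.le, belowParity_eq_zero hPp.ne, belowParity_eq_zero hpQ.ne']

lemma edgeParity_eventually_eq {p P Q : ℝ × ℝ} (hp : p ∉ segment ℝ P Q) :
    ∀ᶠ q in 𝓝 p, edgeParity q P Q =
      edgeParity p P Q + if q.1 < p.1 then belowParity p P + belowParity p Q else 0 := by
  wlog hPQ : P.1 ≤ Q.1 generalizing P Q
  · filter_upwards [this (segment_symm ℝ P Q ▸ hp) (le_of_not_ge hPQ)] with q hq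
    rwa [edgeParity_comm q, edgeParity_comm p, add_comm (belowParity p P)]
  rcases hPQ.eq_or_lt with hPQ | hPQ
  · exact edgeParity_eventually_eq_of_fst_eq hp hPQ
  · exact edgeParity_eventually_eq_of_lt hp hPQ

lemma edgeParity_eq_zero_of_fst_le {p P Q : ℝ × ℝ} (hP : P.1 ≤ p.1) (hQ : Q.1 ≤ p.1) :
    edgeParity p P Q = 0 := by
  rw [edgeParity, if_neg]
  rintro ⟨⟨-, h⟩ | ⟨-, h⟩, -⟩ <;> linarith

lemma edgeParity_eq_zero_of_lt_fst {p P Q : ℝ × ℝ} (hP : p.1 < P.1) (hQ : p.1 < Q.1) :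
    edgeParity p P Q = 0 := by
  rw [edgeParity, if_neg]
  rintro ⟨⟨h, -⟩ | ⟨h, -⟩, -⟩ <;> linarith

lemma chainParity_eq_zero_of_fst_le {V : ℕ → ℝ × ℝ} {n : ℕ} {p : ℝ × ℝ}
    (h : ∀ i ≤ n, (V i).1 ≤ p.1) : chainParity V n p = 0 :=
  Finset.sum_eq_zero fun i hi => edgeParity_eq_zero_of_fst_le
    (h i (Finset.mem_range.1 hi).le) (h (i + 1) (Finset.mem_range.1 hi))

lemma chainParity_eq_zero_of_snd_le {V : ℕ → ℝ × ℝ} {n : ℕ} {p : ℝ × ℝ}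
    (h : ∀ i < n, ∀ z ∈ segment ℝ (V i) (V (i + 1)), p.2 ≤ z.2) : chainParity V n p = 0 := by
  refine Finset.sum_eq_zero fun i hi => if_neg fun hcross => ?_
  obtain ⟨z, hz, -, hz₂⟩ := hcross.exists_mem_segment
  exact (h i (Finset.mem_range.1 hi) z hz).not_gt hz₂

lemma eq_left_of_mem_segment_of_snd_nonneg {P Q z : ℝ × ℝ} (hP : P.2 ≤ 0) (hQ : Q.2 < 0)
    (hz : z ∈ segment ℝ P Q) (hz₂ : 0 ≤ z.2) : z = P := by
  obtain ⟨μ, ν, hμ, hν, hμν, rfl⟩ := hz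
  obtain rfl : ν = 0 := by
    by_contra hne
    have := mul_neg_of_pos_of_neg (hν.lt_of_ne' hne) hQ
    have := mul_nonpos_of_nonneg_of_nonpos hμ hP
    simp only [Prod.snd_add, Prod.smul_snd, smul_eq_mul] at hz₂
    linarith
  obtain rfl : μ = 1 := by simpa using hμν
  simp

lemma chainParity_eventually_eq {V : ℕ → ℝ × ℝ} {n : ℕ} {p : ℝ × ℝ}
    (hp : ∀ i < n, p ∉ segment ℝ (V i) (V (i + 1))) :
    ∀ᶠ q in 𝓝 p, chainParity V n q =
      chainParity V n p + if q.1 < p.1 then belowParity p (V 0) + belowParity p (V n) else 0 := by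
  have hedges := (Finset.eventually_all (Finset.range n)).2 fun i hi =>
    edgeParity_eventually_eq (hp i (Finset.mem_range.1 hi))
  filter_upwards [hedges] with q hq
  rw [chainParity, Finset.sum_congr rfl hq, Finset.sum_add_distrib, ← chainParity]
  congr 1
  split_ifs
  · -- in characteristic two the jumps telescope
    have h := Finset.sum_range_sub (fun i => belowParity p (V i)) n
    simp only [sub_eq_add_neg, ZMod.neg_eq_self_mod_two] at h
    rw [add_comm (belowParity p (V 0)), ← h]
    exact Finset.sum_congr rfl fun i _ => add_comm _ _
  · simp

lemma chainParity_add_eventually_eq {V U : ℕ → ℝ × ℝ} {n k : ℕ} {p : ℝ × ℝ}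
    (hUV : U 0 = V n) (hVU : V 0 = U k) (hV : ∀ i < n, p ∉ segment ℝ (V i) (V (i + 1)))
    (hU : ∀ i < k, p ∉ segment ℝ (U i) (U (i + 1))) :
    ∀ᶠ q in 𝓝 p, chainParity V n q + chainParity U k q =
      chainParity V n p + chainParity U k p := by
  filter_upwards [chainParity_eventually_eq hV, chainParity_eventually_eq hU] with q hV hU
  rw [hV, hU, hUV, hVU]
  split_ifs
  · rw [add_comm (belowParity p (V n)), add_add_add_comm, CharTwo.add_self_eq_zero, add_zero]
  · simp

/-- Closes an arc from `A` to `B` on the axis into a polygon through the lower half-plane. -/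
def bottomChain (A B : ℝ × ℝ) : ℕ → ℝ × ℝ
  | 0 => B
  | 1 => (B.1 + 1, -1)
  | 2 => (A.1 - 1, -1)
  | _ => A

lemma notMem_segment_bottomChain {A B z : ℝ × ℝ} (hA : A.2 = 0) (hB : B.2 = 0) (hz : 0 ≤ z.2)
    (hzA : z ≠ A) (hzB : z ≠ B) :
    ∀ i < 3, z ∉ segment ℝ (bottomChain A B i) (bottomChain A B (i + 1)) := by
  intro i hi hmem
  interval_cases i
  · exact hzB (eq_left_of_mem_segment_of_snd_nonneg hB.le (by simp [bottomChain]) hmem hz)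
  · rw [eq_left_of_mem_segment_of_snd_nonneg (by simp [bottomChain]) (by simp [bottomChain]) hmem
      hz] at hz
    norm_num [bottomChain] at hz
  · rw [segment_symm] at hmem
    exact hzA (eq_left_of_mem_segment_of_snd_nonneg hA.le (by simp [bottomChain]) hmem hz)

lemma chainParity_bottomChain_of_inside {A B p : ℝ × ℝ} (hA : A.1 < p.1) (hB : p.1 < B.1)
    (hp : -1 < p.2) : chainParity (bottomChain A B) 3 p = 1 := by
  have e₀ : edgeParity p (bottomChain A B 0) (bottomChain A B 1) = 0 :=
    edgeParity_eq_zero_of_lt_fst hB (by simp [bottomChain]; linarith)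
  have e₁ : edgeParity p (bottomChain A B 1) (bottomChain A B 2) = 1 :=
    if_pos ⟨Or.inr ⟨by simp [bottomChain]; linarith, by simp [bottomChain]; linarith⟩,
      by simpa [bottomChain, lineHeight] using hp⟩
  have e₂ : edgeParity p (bottomChain A B 2) (bottomChain A B 3) = 0 :=
    edgeParity_eq_zero_of_fst_le (by simp [bottomChain]; linarith) hA.le
  rw [chainParity, Finset.sum_range_succ, Finset.sum_range_succ, Finset.sum_range_one, e₀, e₁, e₂]
  simp

lemma chainParity_bottomChain_of_le {A B p : ℝ × ℝ} (hA : A.1 ≤ p.1) (hB : B.1 + 1 ≤ p.1) :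
    chainParity (bottomChain A B) 3 p = 0 := by
  refine chainParity_eq_zero_of_fst_le fun i hi => ?_
  interval_cases i <;> simp [bottomChain] <;> linarith

lemma eq_of_eventually_eq_along_path {X Y : Type*} [TopologicalSpace X] (W : X → Y) {γ : ℝ → X}
    {a b : ℝ} (hab : a ≤ b) (hγ : ContinuousOn γ (Icc a b))
    (hW : ∀ u ∈ Icc a b, ∀ᶠ q in 𝓝 (γ u), W q = W (γ u)) : W (γ a) = W (γ b) := by
  let _ : TopologicalSpace Y := ⊥
  have _ : DiscreteTopology Y := ⟨rfl⟩
  refine isPreconnected_Icc.constant (f := W ∘ γ) (fun u hu => ?_) (left_mem_Icc.2 hab)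
    (right_mem_Icc.2 hab)
  have hWu : ContinuousAt W (γ u) := by
    rw [ContinuousAt, nhds_discrete Y, tendsto_pure]
    exact hW u hu
  exact hWu.comp_continuousWithinAt (hγ u hu)

section Polygonal

variable {E : Type*} [AddCommGroup E] [Module ℝ E]

def PolygonalIn (K : Set E) (x y : E) : Prop :=
  ∃ (n : ℕ) (V : ℕ → E), V 0 = x ∧ V n = y ∧ ∀ i < n, segment ℝ (V i) (V (i + 1)) ⊆ K

namespace PolygonalIn

variable {K L : Set E} {x y z : E}

lemma refl (K : Set E) (x : E) : PolygonalIn K x x :=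
  ⟨0, fun _ => x, rfl, rfl, by simp⟩

lemma of_segment_subset (h : segment ℝ x y ⊆ K) : PolygonalIn K x y :=
  ⟨1, fun i => if i = 0 then x else y, rfl, rfl, by simpa using h⟩

lemma trans (hxy : PolygonalIn K x y) (hyz : PolygonalIn K y z) : PolygonalIn K x z := by
  obtain ⟨n, V, hV0, hVn, hV⟩ := hxy
  obtain ⟨n', V', hV'0, hV'n, hV'⟩ := hyz
  refine ⟨n + n', fun i => if i ≤ n then V i else V' (i - n), by simpa using hV0, ?_, ?_⟩
  · rcases n'.eq_zero_or_pos with rfl | hn'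
    · simp [hVn, ← hV'0, hV'n]
    · simp [hn'.ne', hV'n]
  · intro i hi
    by_cases hin : i < n
    · simpa [hin.le, Nat.succ_le_of_lt hin] using hV i hin
    · have h := hV' (i - n) (by omega)
      rw [show i - n + 1 = i + 1 - n by omega] at h
      rcases eq_or_lt_of_le (not_lt.1 hin) with rfl | hlt
      · simpa [hVn, ← hV'0] using h
      · simpa [not_le.2 hlt, hin] using h

lemma mono (h : PolygonalIn K x y) (hKL : K ⊆ L) : PolygonalIn L x y := by
  obtain ⟨n, V, hV0, hVn, hV⟩ := h
  exact ⟨n, V, hV0, hVn, fun i hi => (hV i hi).trans hKL⟩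

lemma const_add (h : PolygonalIn K x y) (v : E) : PolygonalIn ((v + ·) '' K) (v + x) (v + y) := by
  obtain ⟨n, V, hV0, hVn, hV⟩ := h
  refine ⟨n, (v + V ·), by simp [hV0], by simp [hVn], fun i hi => ?_⟩
  rw [← segment_translate_image]
  exact image_mono (hV i hi)

end PolygonalIn

def IsAffineOnIcc (g : ℝ → E) (a b : ℝ) : Prop :=
  ∀ s ∈ Icc a b, g s = g a + ((s - a) / (b - a)) • (g b - g a)

lemma segment_subset_image_uIcc {g : ℝ → E} {a b u w : ℝ} (hg : IsAffineOnIcc g a b)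
    (hu : u ∈ Icc a b) (hw : w ∈ Icc a b) : segment ℝ (g u) (g w) ⊆ g '' uIcc u w := by
  rintro _ ⟨μ, ν, hμ, hν, hμν, rfl⟩
  have hs : μ * u + ν * w ∈ uIcc u w := by
    rw [← segment_eq_uIcc]; exact ⟨μ, ν, hμ, hν, hμν, by simp⟩
  refine ⟨μ * u + ν * w, hs, ?_⟩
  rw [hg _ (uIcc_subset_Icc hu hw hs), hg u hu, hg w hw, ← sub_eq_of_eq_add' hμν.symm]
  module

lemma clamp_eq_or_mem_Icc {a b x y : ℝ} (hab : a ≤ b) (hxy : x ≤ y) :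
    max a (min b x) = max a (min b y) ∨
      max a (min b x) ∈ Icc x y ∧ max a (min b y) ∈ Icc x y := by
  simp only [mem_Icc, max_def, min_def]
  split_ifs <;> first | (left; linarith) | (right; constructor <;> constructor <;> linarith)

lemma polygonalIn_image_Icc {F : ℝ → E} {m : ℕ} {t : Fin (m + 1) → ℝ} (ht : Monotone t)
    (hF : ∀ i : Fin m, IsAffineOnIcc F (t i.castSucc) (t i.succ))
    {a b : ℝ} (hab : a ≤ b) (ha : t 0 ≤ a) (hb : b ≤ t (Fin.last m)) :
    PolygonalIn (F '' Icc a b) (F a) (F b) := by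
  set c : ℝ → ℝ := fun x => max a (min b x)
  have hc : ∀ x, c x ∈ Icc a b := fun x => ⟨le_max_left _ _, max_le hab (min_le_left _ _)⟩
  have key : ∀ j, PolygonalIn (F '' Icc a b) (F (c (t 0))) (F (c (t j))) := by
    intro j
    induction j using Fin.induction with
    | zero => exact .refl _ _
    | succ i ih =>
      refine ih.trans (.of_segment_subset ?_)
      rcases clamp_eq_or_mem_Icc hab (ht (Fin.castSucc_le_succ i)) with h | ⟨h₁, h₂⟩
      · rw [show c (t i.castSucc) = c (t i.succ) from h, segment_same, singleton_subset_iff]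
        exact mem_image_of_mem F (hc _)
      · exact (segment_subset_image_uIcc (hF i) h₁ h₂).trans
          (image_mono (uIcc_subset_Icc (hc _) (hc _)))
  simpa [c, max_eq_left ha, max_eq_right hab, min_eq_left hb, min_eq_right (ha.trans hab)] using
    key (Fin.last m)

end Polygonal

lemma PolygonalIn.fst_le_of_avoiding {K : Set (ℝ × ℝ)} {A B : ℝ × ℝ} {M : ℝ}
    (hK : PolygonalIn K A B) (hK₂ : ∀ z ∈ K, 0 ≤ z.2) (hKM : ∀ z ∈ K, z.1 ≤ M)
    (hA : A.2 = 0) (hB : B.2 = 0) {γ : ℝ → ℝ × ℝ} {a b : ℝ} (hab : a ≤ b)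
    (hγ : ContinuousOn γ (Icc a b)) (hγK : ∀ u ∈ Icc a b, γ u ∉ K)
    (hγ₂ : ∀ u ∈ Icc a b, 0 ≤ (γ u).2) (ha₂ : (γ a).2 = 0) (hAa : A.1 < (γ a).1)
    (haB : (γ a).1 < B.1) : (γ b).1 ≤ M + 1 := by
  obtain ⟨n, V, rfl, rfl, hV⟩ := hK
  have hn : n ≠ 0 := by rintro rfl; exact (hAa.trans haB).false
  have hVK : ∀ i ≤ n, V i ∈ K := by
    intro i hi
    rcases hi.lt_or_eq with hi | rfl
    · exact hV i hi (left_mem_segment ℝ _ _)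
    · have h := hV (i - 1) (by omega)
      rw [Nat.sub_add_cancel (Nat.one_le_iff_ne_zero.2 hn)] at h
      exact h (right_mem_segment ℝ _ _)
  let W : ℝ × ℝ → ZMod 2 := fun q => chainParity V n q + chainParity (bottomChain (V 0) (V n)) 3 q
  have hWγ : W (γ a) = W (γ b) := eq_of_eventually_eq_along_path W hab hγ fun u hu =>
    chainParity_add_eventually_eq rfl rfl (fun i hi hmem => hγK u hu (hV i hi hmem))
      (notMem_segment_bottomChain hA hB (hγ₂ u hu) (fun h => hγK u hu (h ▸ hVK 0 n.zero_le))
        (fun h => hγK u hu (h ▸ hVK n le_rfl)))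
  have hWa : W (γ a) = 1 := by
    simp only [W, chainParity_eq_zero_of_snd_le fun i hi z hz => ha₂ ▸ hK₂ z (hV i hi hz),
      chainParity_bottomChain_of_inside hAa haB (by linarith), zero_add]
  by_contra! hfar
  have hM : ∀ i ≤ n, (V i).1 ≤ M := fun i hi => hKM _ (hVK i hi)
  have hWb : W (γ b) = 0 := by
    simp only [W, chainParity_eq_zero_of_fst_le fun i hi => (hM i hi).trans (by linarith),
      chainParity_bottomChain_of_le (A := V 0) (B := V n) (p := γ b)
        (by linarith [hM 0 n.zero_le]) (by linarith [hM n le_rfl]), add_zero]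
  exact one_ne_zero (hWa.symm.trans (hWγ.trans hWb))

lemma exists_int_mul_le_lt {τ : ℝ} (hτ : 0 < τ) (u : ℝ) :
    ∃ k : ℤ, k * τ ≤ u ∧ u < k * τ + τ := by
  obtain ⟨k, ⟨h₁, h₂⟩, -⟩ := existsUnique_zsmul_near_of_pos hτ u
  refine ⟨k, by simpa using h₁, by simpa [add_mul] using h₂⟩

lemma apply_add_nat_mul_of_apply_add {E : Type*} [AddCommMonoid E] {F : ℝ → E} {τ : ℝ} {v : E}
    (h : ∀ u, F (u + τ) = F u + v) (u : ℝ) (n : ℕ) : F (u + n * τ) = F u + n • v := by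
  induction n with
  | zero => simp
  | succ n ih => rw [Nat.cast_succ, add_one_mul, ← add_assoc, h, ih, succ_nsmul, add_assoc]

section PeriodicExtension

variable {E : Type*} [AddCommGroup E] {τ : ℝ} {f F : ℝ → E}

def IsPeriodicExtension (τ : ℝ) (f F : ℝ → E) : Prop :=
  ∀ (k : ℤ) (r : ℝ), 0 ≤ r → r < τ → F (k * τ + r) = k • (f τ - f 0) + f r

namespace IsPeriodicExtension

lemma apply_of_le (hF : IsPeriodicExtension τ f F) (hτ : 0 < τ) (k : ℤ) {r : ℝ} (h₀ : 0 ≤ r)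
    (hr : r ≤ τ) : F (k * τ + r) = k • (f τ - f 0) + f r := by
  rcases hr.lt_or_eq with hr | rfl
  · exact hF k r h₀ hr
  · rw [show (k : ℝ) * r + r = ((k + 1 : ℤ) : ℝ) * r + 0 by push_cast; ring,
      hF (k + 1) 0 le_rfl hτ, add_zsmul, one_zsmul]
    abel

lemma add_period (hF : IsPeriodicExtension τ f F) (hτ : 0 < τ) (u : ℝ) :
    F (u + τ) = F u + (f τ - f 0) := by
  obtain ⟨k, h₁, h₂⟩ := exists_int_mul_le_lt hτ u
  have hu : F u = k • (f τ - f 0) + f (u - k * τ) := by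
    rw [← hF k _ (by linarith) (by linarith), add_sub_cancel]
  rw [hu, show u + τ = ((k + 1 : ℤ) : ℝ) * τ + (u - k * τ) by push_cast; ring,
    hF (k + 1) _ (by linarith) (by linarith), add_zsmul, one_zsmul]
  abel

lemma continuous [TopologicalSpace E] [ContinuousAdd E] (hF : IsPeriodicExtension τ f F)
    (hτ : 0 < τ) (hf : ContinuousOn f (Icc 0 τ)) : Continuous F := by
  have hpiece : ∀ k : ℤ, ContinuousOn F (Icc (k * τ) (k * τ + τ)) := by
    intro k
    have hmaps : MapsTo (fun u : ℝ => u - k * τ) (Icc (k * τ) (k * τ + τ)) (Icc 0 τ) :=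
      fun u hu => ⟨by linarith [hu.1], by linarith [hu.2]⟩
    refine ((continuousOn_const (c := k • (f τ - f 0))).add
      (hf.comp (by fun_prop) hmaps)).congr fun u hu => ?_
    simp only [Pi.add_apply, Function.comp_apply]
    rw [← hF.apply_of_le hτ k (by linarith [hu.1]) (by linarith [hu.2]), add_sub_cancel]
  refine continuous_iff_continuousAt.2 fun u => ?_
  obtain ⟨k, h₁, h₂⟩ := exists_int_mul_le_lt hτ u
  have h := (hpiece (k - 1)).union_of_isClosed (hpiece k) isClosed_Icc isClosed_Icc
  rw [show ((k - 1 : ℤ) : ℝ) * τ = k * τ - τ by push_cast; ring, sub_add_cancel,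
    Icc_union_Icc_eq_Icc (by linarith) (by linarith)] at h
  exact h.continuousAt (Icc_mem_nhds (by linarith) h₂)

variable [Module ℝ E]

lemma polygonalIn_image_Icc_add (hF : IsPeriodicExtension τ f F) (hτ : 0 < τ)
    (hf : ∀ α β, 0 ≤ α → α ≤ β → β ≤ τ → PolygonalIn (f '' Icc α β) (f α) (f β))
    (k : ℤ) {α β : ℝ} (hα : 0 ≤ α) (hαβ : α ≤ β) (hβ : β ≤ τ) :
    PolygonalIn (F '' Icc (k * τ + α) (k * τ + β)) (F (k * τ + α)) (F (k * τ + β)) := by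
  rw [hF.apply_of_le hτ k hα (hαβ.trans hβ), hF.apply_of_le hτ k (hα.trans hαβ) hβ]
  refine ((hf α β hα hαβ hβ).const_add _).mono ?_
  rintro _ ⟨_, ⟨r, hr, rfl⟩, rfl⟩
  exact ⟨k * τ + r, ⟨by linarith [hr.1], by linarith [hr.2]⟩,
    hF.apply_of_le hτ k (hα.trans hr.1) (hr.2.trans hβ)⟩

lemma polygonalIn_image_Icc_period (hF : IsPeriodicExtension τ f F) (hτ : 0 < τ)
    (hf : ∀ α β, 0 ≤ α → α ≤ β → β ≤ τ → PolygonalIn (f '' Icc α β) (f α) (f β)) (a : ℝ) :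
    PolygonalIn (F '' Icc a (a + τ)) (F a) (F (a + τ)) := by
  obtain ⟨k, h₁, h₂⟩ := exists_int_mul_le_lt hτ a
  have first := hF.polygonalIn_image_Icc_add hτ hf k (sub_nonneg.2 h₁) (by linarith) le_rfl
  have second := hF.polygonalIn_image_Icc_add hτ hf (k + 1) le_rfl (sub_nonneg.2 h₁) (by linarith)
  rw [add_sub_cancel] at first
  rw [show ((k + 1 : ℤ) : ℝ) * τ + 0 = k * τ + τ by push_cast; ring,
    show ((k + 1 : ℤ) : ℝ) * τ + (a - k * τ) = a + τ by push_cast; ring] at second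
  exact (first.mono (image_mono (Icc_subset_Icc_right (by linarith)))).trans
    (second.mono (image_mono (Icc_subset_Icc_left (by linarith))))

end IsPeriodicExtension

end PeriodicExtension

lemma apply_add_nat_mul_eq {F : ℝ → ℝ × ℝ} {τ c : ℝ} (hper : ∀ u, F (u + τ) = F u + (c, 0))
    (u : ℝ) (n : ℕ) : F (u + n * τ) = ((F u).1 + n * c, (F u).2) := by
  rw [apply_add_nat_mul_of_apply_add hper]
  ext <;> simp

lemma exists_translate_mem_Ioo {F : ℝ → ℝ × ℝ} {τ c : ℝ} (hτ : 0 < τ) (hc : 0 < c)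
    (hinj : Function.Injective F) (hper : ∀ u, F (u + τ) = F u + (c, 0)) {t₁ t₂ : ℝ}
    (ht : t₁ < t₂) (hz₁ : (F t₁).2 = 0) (hz₂ : (F t₂).2 = 0) (hlt : (F t₂).1 < (F t₁).1) :
    ∃ s, t₁ + τ < s ∧ (F s).2 = 0 ∧ (F t₁).1 < (F s).1 ∧ (F s).1 < (F t₁).1 + c := by
  set j := ⌊((F t₁).1 - (F t₂).1) / c⌋₊
  have hj : (F t₂).1 + j * c < (F t₁).1 := by
    have h := Nat.floor_le (div_nonneg (sub_nonneg.2 hlt.le) hc.le)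
    rw [le_div_iff₀ hc] at h
    refine (by linarith : (F t₂).1 + j * c ≤ (F t₁).1).lt_of_ne fun h => ?_
    have := hinj ((apply_add_nat_mul_eq hper t₂ j).trans (Prod.ext h (hz₂.trans hz₁.symm)))
    nlinarith [(Nat.cast_nonneg j : (0 : ℝ) ≤ j)]
  have hj' : (F t₁).1 < (F t₂).1 + (j + 1) * c := by
    have h := Nat.lt_floor_add_one (((F t₁).1 - (F t₂).1) / c)
    rw [div_lt_iff₀ hc] at h
    linarith
  refine ⟨t₂ + ((j + 1 : ℕ) : ℝ) * τ, ?_, ?_⟩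
  · have : (1 : ℝ) * τ ≤ ((j + 1 : ℕ) : ℝ) * τ := by gcongr; simp
    linarith
  · rw [apply_add_nat_mul_eq hper]
    push_cast
    exact ⟨hz₂, by linarith, by linarith⟩

theorem fst_lt_fst_of_snd_eq_zero {F : ℝ → ℝ × ℝ} {τ c : ℝ} (hτ : 0 < τ) (hc : 0 < c)
    (hcont : Continuous F) (hinj : Function.Injective F) (hper : ∀ u, F (u + τ) = F u + (c, 0))
    (hF₂ : ∀ u, 0 ≤ (F u).2) (hpoly : ∀ a, PolygonalIn (F '' Icc a (a + τ)) (F a) (F (a + τ)))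
    {t₁ t₂ : ℝ} (ht : t₁ < t₂) (hz₁ : (F t₁).2 = 0) (hz₂ : (F t₂).2 = 0) :
    (F t₁).1 < (F t₂).1 := by
  by_contra! hle
  have hlt : (F t₂).1 < (F t₁).1 :=
    hle.lt_of_ne fun h => ht.ne' (hinj (Prod.ext h (hz₂.trans hz₁.symm)))
  obtain ⟨s, hts, hs₂, hs₁, hs₁'⟩ := exists_translate_mem_Ioo hτ hc hinj hper ht hz₁ hz₂ hlt
  obtain ⟨M, hM⟩ := (((isCompact_Icc (a := t₁) (b := t₁ + τ)).image hcont).image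
    continuous_fst).bddAbove
  -- a translate of `t₁` far to the right of the arc
  obtain ⟨N, hN⟩ := exists_nat_gt (max ((M + 1 - (F t₁).1) / c) ((s - t₁) / τ))
  rw [max_lt_iff, div_lt_iff₀ hc, div_lt_iff₀ hτ] at hN
  have hfar := (hpoly t₁).fst_le_of_avoiding (M := M)
    (by rintro _ ⟨u, -, rfl⟩; exact hF₂ u) (fun z hz => hM (mem_image_of_mem _ hz))
    hz₁ (by simp [hper, hz₁]) (a := s) (b := t₁ + N * τ) (by linarith) hcont.continuousOn
    (by
      rintro u hu ⟨w, hw, hwu⟩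
      rw [hinj hwu] at hw
      linarith [hw.2, hu.1])
    (fun u _ => hF₂ u) hs₂ hs₁ (by simpa [hper] using hs₁')
  rw [apply_add_nat_mul_eq hper] at hfar
  linarith

end

/-- `F` is the periodic extension of the continuous piecewise-linear map
`f : [0, τ] → ℝ²`. The zeros of the second coordinate of `F` appear in
strictly increasing first-coordinate order. -/
theorem stmt14 (τ : ℝ) (hτ : 0 < τ) (f F : ℝ → ℝ × ℝ)
    (hf : ContinuousOn f (Set.Icc 0 τ))
    (hPL : ∃ (m : ℕ) (t : Fin (m + 1) → ℝ), StrictMono t ∧ t 0 = 0 ∧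
      t (Fin.last m) = τ ∧
      ∀ (i : Fin m) (s : ℝ), s ∈ Set.Icc (t i.castSucc) (t i.succ) →
        f s = f (t i.castSucc) +
          ((s - t i.castSucc) / (t i.succ - t i.castSucc)) •
            (f (t i.succ) - f (t i.castSucc)))
    (hF : ∀ (k : ℤ) (r : ℝ), 0 ≤ r → r < τ →
      F (k * τ + r) = k • (f τ - f 0) + f r)
    (hinj : Function.Injective F)
    (hf0 : f 0 = (0, 0)) (hfτ2 : (f τ).2 = 0) (hfτ1 : 0 < (f τ).1)
    (hmin : (∀ t : ℝ, 0 ≤ (F t).2) ∧ (∃ t : ℝ, (F t).2 = 0)) :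
    ∀ t₁ t₂ : ℝ, t₁ < t₂ → (F t₁).2 = 0 → (F t₂).2 = 0 → (F t₁).1 < (F t₂).1 := by
  intro t₁ t₂ ht hz₁ hz₂
  obtain ⟨m, t, ht_mono, ht0, htm, hlin⟩ := hPL
  have hext : IsPeriodicExtension τ f F := hF
  have hshift : f τ - f 0 = ((f τ).1, 0) := by
    rw [hf0]
    ext <;> simp [hfτ2]
  have hpoly : ∀ α β, 0 ≤ α → α ≤ β → β ≤ τ → PolygonalIn (f '' Icc α β) (f α) (f β) :=
    fun α β hα hαβ hβ => polygonalIn_image_Icc ht_mono.monotone hlin hαβ (ht0 ▸ hα) (htm ▸ hβ)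
  exact fst_lt_fst_of_snd_eq_zero hτ hfτ1 (hext.continuous hτ hf) hinj
    (fun u => by rw [hext.add_period hτ, hshift]) hmin.1
    (hext.polygonalIn_image_Icc_period hτ hpoly) ht hz₁ hz₂
end
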